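/- arXiv:2505.21014 — 3 statements merged into one kernel-verified Lean document; each statement's English description precedes it below -/
import Mathlib

section
/- Let α̃ = (0)(1 2 … n)(n+1 … 2n) ∈ S_0(2n) and let π range over pair partitions of [2n] pairing each element of {1,…,n} with an element of {n+1,…,2n} (viewed as products of n transpositions). There is exactly one such π, namely π = (1, 2n)(2, 2n-1)⋯(n, n+1), with the property that πα̃ is a product of (0) and n transpositions one of which is (n, 2n). -/
/-!
The pair `(n, 2n)` of `πα̃` forces `π 1 = 2n`. Going on along the first cycle, for `1 ≤ j < n`
the point `j` is paired by `πα̃` with `π (j + 1) ∈ {n+1, …, 2n-1}`, and `πα̃` sends that point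
to `π (π (j + 1) + 1)`; so `π (π (j + 1) + 1) = j = π (π j)`, i.e. `π (j + 1) = π j - 1`.
Hence `π j = 2n + 1 - j` on `{1, …, n}`, and on the second block since `π` is an involution.
Conversely this reversal works: `πα̃` is `i ↦ 2n - i` on `{1, …, 2n-1} \ {n}` together with
`(n, 2n)`.
-/

def IsCrossPairing (n : ℕ) (π : Equiv.Perm ℕ) : Prop :=
  (∀ i, 1 ≤ i → i ≤ n → n + 1 ≤ π i ∧ π i ≤ 2 * n) ∧
  (∀ i, 1 ≤ i → i ≤ 2 * n → π (π i) = i ∧ π i ≠ i) ∧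
  π 0 = 0 ∧ (∀ i, 2 * n < i → π i = i)

def IsPairingContainingLast (n : ℕ) (σ : Equiv.Perm ℕ) : Prop :=
  σ 0 = 0 ∧ (∀ i, 1 ≤ i → i ≤ 2 * n → σ (σ i) = i ∧ σ i ≠ i) ∧ σ n = 2 * n

noncomputable def reversePairing (n : ℕ) : Equiv.Perm ℕ :=
  Function.Involutive.toPerm (fun i => if 1 ≤ i ∧ i ≤ 2 * n then 2 * n + 1 - i else i)
    (fun i => by dsimp only; split_ifs <;> omega)

lemma reversePairing_apply_of_mem {n i : ℕ} (h₁ : 1 ≤ i) (h₂ : i ≤ 2 * n) :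
    reversePairing n i = 2 * n + 1 - i := if_pos ⟨h₁, h₂⟩

lemma reversePairing_apply_of_not_mem {n i : ℕ} (h : i = 0 ∨ 2 * n < i) :
    reversePairing n i = i := if_neg (by omega)

lemma isCrossPairing_reversePairing (n : ℕ) : IsCrossPairing n (reversePairing n) := by
  refine ⟨fun i h₁ h₂ => ?_, fun i h₁ h₂ => ?_, reversePairing_apply_of_not_mem (.inl rfl),
    fun i h => reversePairing_apply_of_not_mem (.inr h)⟩
  · rw [reversePairing_apply_of_mem h₁ (by omega)]; omega
  · rw [reversePairing_apply_of_mem h₁ h₂, reversePairing_apply_of_mem (by omega) (by omega)]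
    omega

section CycleProduct

variable {n : ℕ} {α π : Equiv.Perm ℕ} (hπ : IsCrossPairing n π)
  (hα₁ : ∀ i, 1 ≤ i → i < n → α i = i + 1) (hαn : α n = 1)
  (hα₂ : ∀ i, n + 1 ≤ i → i < 2 * n → α i = i + 1)

include hα₁ hαn hα₂ in
lemma reversePairing_mul_apply (hα2n : α (2 * n) = n + 1) {i : ℕ} (h₁ : 1 ≤ i) (h₂ : i ≤ 2 * n) :
    (reversePairing n * α) i = if i = n then 2 * n else if i = 2 * n then n else 2 * n - i := by
  rw [Equiv.Perm.mul_apply]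
  rcases lt_trichotomy i n with h | rfl | h
  · rw [hα₁ i h₁ h, reversePairing_apply_of_mem (by omega) (by omega)]; split_ifs <;> omega
  · rw [hαn, reversePairing_apply_of_mem le_rfl (by omega)]; simp
  · rcases h₂.lt_or_eq with h₂ | rfl
    · rw [hα₂ i h h₂, reversePairing_apply_of_mem (by omega) (by omega)]; split_ifs <;> omega
    · rw [hα2n, reversePairing_apply_of_mem (by omega) (by omega)]; split_ifs <;> omega

include hα₁ hαn hα₂ in
lemma isPairingContainingLast_reversePairing_mul (hn : 1 ≤ n) (hα₀ : α 0 = 0)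
    (hα2n : α (2 * n) = n + 1) : IsPairingContainingLast n (reversePairing n * α) := by
  have hσ := fun {i} => reversePairing_mul_apply hα₁ hαn hα₂ hα2n (i := i)
  refine ⟨?_, fun i h₁ h₂ => ⟨?_, ?_⟩, ?_⟩
  · rw [Equiv.Perm.mul_apply, hα₀, reversePairing_apply_of_not_mem (.inl rfl)]
  · rw [hσ h₁ h₂]
    split_ifs with h h'
    · rw [hσ (by omega) le_rfl]; split_ifs <;> omega
    · rw [hσ hn (by omega)]; split_ifs <;> omega
    · rw [hσ (by omega) (by omega)]; split_ifs <;> omega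
  · rw [hσ h₁ h₂]; split_ifs <;> omega
  · rw [hσ hn (by omega), if_pos rfl]

variable (hσ : IsPairingContainingLast n (π * α))

include hα₁ hαn hα₂ hπ hσ in
lemma IsCrossPairing.apply_succ_add_one {j : ℕ} (h₁ : 1 ≤ j) (h₂ : j < n) :
    π (j + 1) + 1 = π j := by
  have hπ1 : π 1 = 2 * n := hαn ▸ hσ.2.2
  obtain ⟨hlo, hhi⟩ := hπ.1 (j + 1) (by omega) h₂
  have hne : π (j + 1) ≠ 2 * n := fun h => by
    have := π.injective (hπ1.trans h.symm); omega
  have hσj := (hσ.2.1 j h₁ (by omega)).1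
  simp only [Equiv.Perm.mul_apply] at hσj
  rw [hα₁ j h₁ h₂, hα₂ _ hlo (by omega)] at hσj
  exact π.injective (hσj.trans (hπ.2.1 j h₁ (by omega)).1.symm)

include hα₁ hαn hα₂ hπ hσ in
lemma IsCrossPairing.apply_eq_two_mul_add_one_sub_of_le {i : ℕ} (h₁ : 1 ≤ i) (h₂ : i ≤ n) :
    π i = 2 * n + 1 - i := by
  induction i, h₁ using Nat.le_induction with
  | base =>
    have : π 1 = 2 * n := hαn ▸ hσ.2.2
    omega
  | succ j hj ih =>
    have := hπ.apply_succ_add_one hα₁ hαn hα₂ hσ hj (by omega)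
    have := ih (by omega)
    omega

include hα₁ hαn hα₂ hπ hσ in
lemma IsCrossPairing.apply_eq_two_mul_add_one_sub {i : ℕ} (h₁ : 1 ≤ i) (h₂ : i ≤ 2 * n) :
    π i = 2 * n + 1 - i := by
  rcases le_or_gt i n with h | h
  · exact hπ.apply_eq_two_mul_add_one_sub_of_le hα₁ hαn hα₂ hσ h₁ h
  · have hj := hπ.apply_eq_two_mul_add_one_sub_of_le hα₁ hαn hα₂ hσ
      (i := 2 * n + 1 - i) (by omega) (by omega)
    have hinv := (hπ.2.1 (2 * n + 1 - i) (by omega) (by omega)).1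
    rw [hj, show 2 * n + 1 - (2 * n + 1 - i) = i by omega] at hinv
    exact hinv

include hα₁ hαn hα₂ hπ hσ in
lemma IsCrossPairing.eq_reversePairing : π = reversePairing n := by
  ext i
  rcases Nat.eq_zero_or_pos i with rfl | h₁
  · rw [hπ.2.2.1, reversePairing_apply_of_not_mem (.inl rfl)]
  rcases le_or_gt i (2 * n) with h₂ | h₂
  · rw [hπ.apply_eq_two_mul_add_one_sub hα₁ hαn hα₂ hσ h₁ h₂, reversePairing_apply_of_mem h₁ h₂]
  · rw [hπ.2.2.2 i h₂, reversePairing_apply_of_not_mem (.inr h₂)]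

end CycleProduct

theorem stmt11_general (n : ℕ) (hn : 1 ≤ n) (α : Equiv.Perm ℕ)
    (hα0 : α 0 = 0)
    (hα1 : ∀ i, 1 ≤ i → i < n → α i = i + 1) (hαn : α n = 1)
    (hα2 : ∀ i, n + 1 ≤ i → i < 2 * n → α i = i + 1) (hα2n : α (2 * n) = n + 1) :
    (∃! π : Equiv.Perm ℕ,
      ((∀ i, 1 ≤ i → i ≤ n → n + 1 ≤ π i ∧ π i ≤ 2 * n) ∧
       (∀ i, 1 ≤ i → i ≤ 2 * n → π (π i) = i ∧ π i ≠ i) ∧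
       (π 0 = 0) ∧ (∀ i, 2 * n < i → π i = i)) ∧
      ((π * α) 0 = 0 ∧
       (∀ i, 1 ≤ i → i ≤ 2 * n → (π * α) ((π * α) i) = i ∧ (π * α) i ≠ i) ∧
       (π * α) n = 2 * n)) ∧
    (∀ π : Equiv.Perm ℕ,
      ((∀ i, 1 ≤ i → i ≤ n → n + 1 ≤ π i ∧ π i ≤ 2 * n) ∧
       (∀ i, 1 ≤ i → i ≤ 2 * n → π (π i) = i ∧ π i ≠ i) ∧
       (π 0 = 0) ∧ (∀ i, 2 * n < i → π i = i)) →
      ((π * α) 0 = 0 ∧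
       (∀ i, 1 ≤ i → i ≤ 2 * n → (π * α) ((π * α) i) = i ∧ (π * α) i ≠ i) ∧
       (π * α) n = 2 * n) →
      ∀ i, 1 ≤ i → i ≤ 2 * n → π i = 2 * n + 1 - i) :=
  ⟨⟨reversePairing n,
      ⟨isCrossPairing_reversePairing n,
        isPairingContainingLast_reversePairing_mul hα1 hαn hα2 hn hα0 hα2n⟩,
      fun _ ⟨hπ, hσ⟩ => IsCrossPairing.eq_reversePairing hπ hα1 hαn hα2 hσ⟩,
    fun _ hπ hσ _ => IsCrossPairing.apply_eq_two_mul_add_one_sub hπ hα1 hαn hα2 hσ⟩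

/-- With `α̃ = (0)(1 2 … n)(n+1 … 2n)` (a permutation of ℕ fixing everything
outside `{0,…,2n}`), there is exactly one pair partition `π ∈ 𝒫₂(n,n)` (a fixed-point-free
involution on `{1,…,2n}`, fixing everything else, pairing `{1,…,n}` with `{n+1,…,2n}`)
such that `πα̃` fixes `0`, is a fixed-point-free involution on `{1,…,2n}` (a product of `n`
transpositions) and has `(n, 2n)` as one of its transpositions; namely
`π = (1,2n)(2,2n-1)⋯(n,n+1)`, i.e. `π i = 2n+1-i` on `{1,…,2n}`. -/
theorem stmt11 (n : ℕ) (hn : 1 ≤ n) (α : Equiv.Perm ℕ)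
    (hα0 : α 0 = 0)
    (hα1 : ∀ i, 1 ≤ i → i < n → α i = i + 1) (hαn : α n = 1)
    (hα2 : ∀ i, n + 1 ≤ i → i < 2 * n → α i = i + 1) (hα2n : α (2 * n) = n + 1)
    (hαout : ∀ i, 2 * n < i → α i = i) :
    (∃! π : Equiv.Perm ℕ,
      ((∀ i, 1 ≤ i → i ≤ n → n + 1 ≤ π i ∧ π i ≤ 2 * n) ∧
       (∀ i, 1 ≤ i → i ≤ 2 * n → π (π i) = i ∧ π i ≠ i) ∧
       (π 0 = 0) ∧ (∀ i, 2 * n < i → π i = i)) ∧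
      ((π * α) 0 = 0 ∧
       (∀ i, 1 ≤ i → i ≤ 2 * n → (π * α) ((π * α) i) = i ∧ (π * α) i ≠ i) ∧
       (π * α) n = 2 * n)) ∧
    (∀ π : Equiv.Perm ℕ,
      ((∀ i, 1 ≤ i → i ≤ n → n + 1 ≤ π i ∧ π i ≤ 2 * n) ∧
       (∀ i, 1 ≤ i → i ≤ 2 * n → π (π i) = i ∧ π i ≠ i) ∧
       (π 0 = 0) ∧ (∀ i, 2 * n < i → π i = i)) →
      ((π * α) 0 = 0 ∧
       (∀ i, 1 ≤ i → i ≤ 2 * n → (π * α) ((π * α) i) = i ∧ (π * α) i ≠ i) ∧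
       (π * α) n = 2 * n) →
      ∀ i, 1 ≤ i → i ≤ 2 * n → π i = 2 * n + 1 - i) :=
  stmt11_general n hn α hα0 hα1 hαn hα2 hα2n
end

section
/- Matrix-valued stationarity/covariance: let R : ℝ → ℝ^{N×N} with R(t) = ∫ Φ(s)ᵀ Φ(t+s) ds where Φ : ℝ → ℝ^{N×N} is square-integrable with ∫ Φ(s)ᵀΦ(s) ds = I_N. Then the symmetric positive semidefinite matrix 𝐑(t) = (R(t)R(t)ᵀ)^{1/2} satisfies 𝐑(t) ≤ I_N in the Loewner order, for every t. -/
open MeasureTheory Matrix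

private lemma l2_mul_integrable {a b : ℝ → ℝ} (ha : MemLp a 2 (volume : Measure ℝ))
    (hb : MemLp b 2 (volume : Measure ℝ)) :
    Integrable (fun s => a s * b s) (volume : Measure ℝ) := by
  have h : MemLp (a • b) 1 (volume : Measure ℝ) :=
    hb.smul ha (hpqr := ⟨by simp [ENNReal.inv_two_add_inv_two]⟩)
  rw [memLp_one_iff_integrable] at h
  exact h

private lemma dot_mulVec_mulVec {N : ℕ} (A B : Matrix (Fin N) (Fin N) ℝ) (w v : Fin N → ℝ) :
    (A *ᵥ w) ⬝ᵥ (B *ᵥ v) = w ⬝ᵥ ((Aᵀ * B) *ᵥ v) := by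
  rw [dotProduct_mulVec, ← mulVec_transpose, mulVec_mulVec, dotProduct_mulVec,
    ← mulVec_transpose, Matrix.transpose_mul, transpose_transpose]

/-- Let `Φ : ℝ → M_N(ℝ)` be measurable with square-integrable entries and
`∫ Φ(s)ᵀΦ(s) ds = I_N`, and set `R(t) = ∫ Φ(s)ᵀΦ(t+s) ds`. Then the positive semidefinite
square root `𝐑(t) = (R(t)R(t)ᵀ)^{1/2}` satisfies `𝐑(t) ≤ I_N` in the Loewner order:
any positive semidefinite `S` with `S² = R(t)R(t)ᵀ` satisfies `I_N - S ⪰ 0`. -/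
theorem stmt16 (N : ℕ) (Φ : ℝ → Matrix (Fin N) (Fin N) ℝ)
    (hmeas : ∀ i j, Measurable fun s => Φ s i j)
    (hL2 : ∀ i j, MemLp (fun s => Φ s i j) 2 (volume : Measure ℝ))
    (hnorm : ∀ i j, (∫ s : ℝ, ((Φ s)ᵀ * Φ s) i j) = (1 : Matrix (Fin N) (Fin N) ℝ) i j)
    (R : ℝ → Matrix (Fin N) (Fin N) ℝ)
    (hR : ∀ t i j, R t i j = ∫ s : ℝ, ((Φ s)ᵀ * Φ (t + s)) i j) :
    ∀ t : ℝ, ∀ S : Matrix (Fin N) (Fin N) ℝ,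
      S.PosSemidef → S * S = R t * (R t)ᵀ → (1 - S).PosSemidef := by
  intro t S hS hSS
  -- shifted entries are L²
  have hshift : ∀ (a : ℝ) i j, MemLp (fun s : ℝ => Φ (a + s) i j) 2 (volume : Measure ℝ) :=
    fun a i j =>
      (hL2 i j).comp_measurePreserving (measurePreserving_add_left volume a)
  -- integrability of entries of Φ(a+·)ᵀΦ(b+·)
  have hint : ∀ (a b : ℝ) i j,
      Integrable (fun s => ((Φ (a + s))ᵀ * Φ (b + s)) i j) volume := by
    intro a b i j
    have h : (fun s => ((Φ (a + s))ᵀ * Φ (b + s)) i j)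
        = fun s => ∑ k, Φ (a + s) k i * Φ (b + s) k j := by
      funext s; simp [Matrix.mul_apply]
    rw [h]
    exact integrable_finset_sum _ fun k _ => l2_mul_integrable (hshift a k i) (hshift b k j)
  -- value of the bilinear integral
  have hval : ∀ (a b : ℝ) (w v : Fin N → ℝ),
      (∫ s : ℝ, (Φ (a + s) *ᵥ w) ⬝ᵥ (Φ (b + s) *ᵥ v))
        = ∑ i, ∑ j, w i * v j * ∫ s : ℝ, ((Φ (a + s))ᵀ * Φ (b + s)) i j := by
    intro a b w v
    have h1 : ∀ s : ℝ, (Φ (a + s) *ᵥ w) ⬝ᵥ (Φ (b + s) *ᵥ v)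
        = ∑ i, ∑ j, w i * v j * ((Φ (a + s))ᵀ * Φ (b + s)) i j := by
      intro s
      rw [dot_mulVec_mulVec]
      simp only [dotProduct, mulVec, Finset.mul_sum]
      exact Finset.sum_congr rfl fun i _ => Finset.sum_congr rfl fun j _ => by ring
    simp_rw [h1]
    rw [integral_finset_sum _ fun i _ =>
      integrable_finset_sum _ fun j _ => ((hint a b i j).const_mul _)]
    refine Finset.sum_congr rfl fun i _ => ?_
    rw [integral_finset_sum _ fun j _ => ((hint a b i j).const_mul _)]
    exact Finset.sum_congr rfl fun j _ => integral_const_mul _ _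
  -- same-shift integral
  have hsame : ∀ (a : ℝ) (w v : Fin N → ℝ),
      (∫ s : ℝ, (Φ (a + s) *ᵥ w) ⬝ᵥ (Φ (a + s) *ᵥ v)) = w ⬝ᵥ v := by
    intro a w v
    rw [hval]
    have he : ∀ i j, (∫ s : ℝ, ((Φ (a + s))ᵀ * Φ (a + s)) i j)
        = (1 : Matrix (Fin N) (Fin N) ℝ) i j := by
      intro i j
      have := integral_add_left_eq_self (μ := volume)
        (fun s => ((Φ s)ᵀ * Φ s) i j) a
      simpa using this.trans (hnorm i j)
    simp_rw [he]
    simp [Matrix.one_apply, dotProduct, Finset.sum_ite_eq, mul_ite, ite_mul]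
  -- cross integral
  have hcrossI : ∀ (w v : Fin N → ℝ),
      (∫ s : ℝ, (Φ (0 + s) *ᵥ w) ⬝ᵥ (Φ (t + s) *ᵥ v)) = w ⬝ᵥ (R t *ᵥ v) := by
    intro w v
    rw [hval]
    have he : ∀ i j, (∫ s : ℝ, ((Φ (0 + s))ᵀ * Φ (t + s)) i j) = R t i j := by
      intro i j; simp_rw [zero_add]; exact (hR t i j).symm
    simp_rw [he]
    simp only [dotProduct, mulVec, Finset.mul_sum]
    exact Finset.sum_congr rfl fun i _ => Finset.sum_congr rfl fun j _ => by ring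
  -- membership in L² of the vector-valued functions
  have hFmem : ∀ (a : ℝ) (w : Fin N → ℝ),
      MemLp (fun s : ℝ => ((WithLp.equiv 2 (Fin N → ℝ)).symm (Φ (a + s) *ᵥ w))) 2
        (volume : Measure ℝ) := by
    intro a w
    have hrw : (fun s : ℝ => ((WithLp.equiv 2 (Fin N → ℝ)).symm (Φ (a + s) *ᵥ w)))
        = fun s : ℝ => ∑ k, (∑ j, w j * Φ (a + s) k j) • EuclideanSpace.single k (1 : ℝ) := by
      funext s
      ext i
      rw [WithLp.ofLp_sum, Finset.sum_apply]
      simp [mulVec, dotProduct, EuclideanSpace.single_apply, PiLp.smul_apply, smul_eq_mul,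
        mul_comm, Finset.sum_ite_eq', mul_ite, ite_mul]
    rw [hrw]
    refine memLp_finsetSum _ fun k _ => ?_
    have hφ : MemLp (fun s : ℝ => ∑ j, w j * Φ (a + s) k j) 2 (volume : Measure ℝ) := by
      have := memLp_finsetSum (μ := (volume : Measure ℝ)) Finset.univ
        (f := fun j (s : ℝ) => w j * Φ (a + s) k j)
        (fun j _ => (hshift a k j).const_mul (w j))
      simpa using this
    exact MemLp.smul (memLp_top_const _) hφ
  -- inner products in L²
  have hinner : ∀ (a b : ℝ) (w v : Fin N → ℝ),
      (inner ℝ ((hFmem a w).toLp _) ((hFmem b v).toLp _) : ℝ)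
        = ∫ s : ℝ, (Φ (a + s) *ᵥ w) ⬝ᵥ (Φ (b + s) *ᵥ v) := by
    intro a b w v
    rw [MeasureTheory.L2.inner_def]
    refine integral_congr_ae ?_
    filter_upwards [(hFmem a w).coeFn_toLp, (hFmem b v).coeFn_toLp] with s h1 h2
    rw [h1, h2]
    simp [PiLp.inner_apply, RCLike.inner_apply, dotProduct, mul_comm]
  -- Cauchy–Schwarz for the bilinear form
  have hCS : ∀ (w v : Fin N → ℝ), (w ⬝ᵥ (R t *ᵥ v)) ^ 2 ≤ (w ⬝ᵥ w) * (v ⬝ᵥ v) := by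
    intro w v
    set Fw := (hFmem 0 w).toLp _ with hFwdef
    set Gv := (hFmem t v).toLp _ with hGvdef
    have h1 : (inner ℝ Fw Gv : ℝ) = w ⬝ᵥ (R t *ᵥ v) := by
      rw [hFwdef, hGvdef, hinner 0 t w v, hcrossI]
    have h2 : ‖Fw‖ ^ 2 = w ⬝ᵥ w := by
      rw [← real_inner_self_eq_norm_sq, hFwdef, hinner 0 0 w w, hsame]
    have h3 : ‖Gv‖ ^ 2 = v ⬝ᵥ v := by
      rw [← real_inner_self_eq_norm_sq, hGvdef, hinner t t v v, hsame]
    have habs := abs_real_inner_le_norm Fw Gv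
    calc (w ⬝ᵥ (R t *ᵥ v)) ^ 2 = |(inner ℝ Fw Gv : ℝ)| ^ 2 := by rw [sq_abs, h1]
      _ ≤ (‖Fw‖ * ‖Gv‖) ^ 2 := pow_le_pow_left₀ (abs_nonneg _) habs 2
      _ = ‖Fw‖ ^ 2 * ‖Gv‖ ^ 2 := by ring
      _ = (w ⬝ᵥ w) * (v ⬝ᵥ v) := by rw [h2, h3]
  -- dot-product positivity
  have hdpos : ∀ x : Fin N → ℝ, 0 ≤ x ⬝ᵥ x :=
    fun x => Finset.sum_nonneg fun i _ => mul_self_nonneg _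
  -- the operator R(t)ᵀ is a contraction
  have hRt : ∀ x : Fin N → ℝ, ((R t)ᵀ *ᵥ x) ⬝ᵥ ((R t)ᵀ *ᵥ x) ≤ x ⬝ᵥ x := by
    intro x
    set u := (R t)ᵀ *ᵥ x with hu
    have h0 : x ⬝ᵥ (R t *ᵥ u) = u ⬝ᵥ u := by
      rw [dotProduct_mulVec, ← mulVec_transpose]
    have h1 := hCS x u
    rw [h0] at h1
    nlinarith [hdpos u, hdpos x]
  -- S is a contraction as a quadratic form
  have hSle : ∀ x : Fin N → ℝ, x ⬝ᵥ (S *ᵥ x) ≤ x ⬝ᵥ x := by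
    intro x
    have hsym : Sᵀ = S := by
      have h := hS.1
      rwa [← conjTranspose_eq_transpose_of_trivial]
    have hy : (S *ᵥ x) ⬝ᵥ (S *ᵥ x) = ((R t)ᵀ *ᵥ x) ⬝ᵥ ((R t)ᵀ *ᵥ x) := by
      rw [dot_mulVec_mulVec, dot_mulVec_mulVec, hsym, hSS, transpose_transpose]
    have hfinCS : (x ⬝ᵥ (S *ᵥ x)) ^ 2 ≤ (x ⬝ᵥ x) * ((S *ᵥ x) ⬝ᵥ (S *ᵥ x)) := by
      have := Finset.sum_mul_sq_le_sq_mul_sq Finset.univ x (S *ᵥ x)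
      simpa [dotProduct, sq] using this
    have h2 := hRt x
    rw [← hy] at h2
    nlinarith [hdpos x, hdpos (S *ᵥ x)]
  refine posSemidef_iff_dotProduct_mulVec.mpr ⟨(Matrix.isHermitian_one).sub hS.1, ?_⟩
  intro x
  have : star x ⬝ᵥ ((1 - S) *ᵥ x) = x ⬝ᵥ x - x ⬝ᵥ (S *ᵥ x) := by
    simp [sub_mulVec, dotProduct_sub]
  rw [this]
  exact sub_nonneg.mpr (hSle x)
end

section
/- Graph-theoretic integral bound: let ρ : ℝ → [0,∞) be integrable with ρ ≤ 1, and let G be a connected graph on vertices {1,…,r} (r ≥ 2) in which every vertex has degree ≥ 1. Then ∫_{[0,T]^r} ∏_{(i,j) ∈ E(G')} ρ(t_i - t_j) dt₁⋯dt_r ≤ T · (∫_ℝ ρ(t) dt)^{r-1}, where G' is a spanning tree of G (i.e. it suffices to bound using r-1 edges forming a spanning tree, after the change of variables u_k = t_{i_k} - t_{j_k} along tree edges and u_r = t_r, which has Jacobian 1). -/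
open MeasureTheory Finset
open scoped ENNReal

/-- Let `ρ : ℝ → [0,1]` be integrable, `T > 0`, `r ≥ 2`, and `E` a set of
`r - 1` oriented edges (without self-loops) on vertices `{1,…,r}` forming a spanning tree
(the associated simple graph is connected with `r-1` distinct edges). Then
`∫_{[0,T]^r} ∏_{(i,j)∈E} ρ(t_i - t_j) dt ≤ T · (∫ ρ)^{r-1}`. -/
theorem stmt19 (ρ : ℝ → ℝ) (hmeas : Measurable ρ) (hint : Integrable ρ)
    (h0 : ∀ x, 0 ≤ ρ x) (h1 : ∀ x, ρ x ≤ 1)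
    (T : ℝ) (hT : 0 < T) (r : ℕ) (hr : 2 ≤ r)
    (E : Finset (Fin r × Fin r))
    (hloop : ∀ p ∈ E, p.1 ≠ p.2)
    (hcard : E.card = r - 1)
    (hinj : Set.InjOn (fun p : Fin r × Fin r => s(p.1, p.2)) E)
    (hconn : (SimpleGraph.fromEdgeSet
      {e : Sym2 (Fin r) | ∃ p ∈ E, e = s(p.1, p.2)}).Connected) :
    (∫ t : Fin r → ℝ in Set.pi Set.univ (fun _ => Set.Icc (0 : ℝ) T),
        ∏ p ∈ E, ρ (t p.1 - t p.2))
      ≤ T * (∫ x : ℝ, ρ x) ^ (r - 1) := by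
  classical
  have hrpos : 0 < r := by omega
  -- ENNReal versions
  set g : ℝ → ℝ≥0∞ := fun x => ENNReal.ofReal (ρ x) with hgdef
  have hg : Measurable g := hmeas.ennreal_ofReal
  set I : ℝ≥0∞ := ∫⁻ x, g x with hIdef
  set G : SimpleGraph (Fin r) :=
    SimpleGraph.fromEdgeSet {e : Sym2 (Fin r) | ∃ p ∈ E, e = s(p.1, p.2)} with hGdef
  set root : Fin r := ⟨0, hrpos⟩ with hroot
  set d : Fin r → ℕ := fun v => G.dist root v with hddef
  -- parent structure
  have key : ∀ v : Fin r, v ≠ root → ∃ q : Fin r × Fin r, ∃ w : Fin r,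
      q ∈ E ∧ s(q.1, q.2) = s(v, w) ∧ d w + 1 = d v := by
    intro v hv
    obtain ⟨p, hp⟩ := SimpleGraph.Reachable.exists_walk_length_eq_dist (hconn v root)
    have hnn : ¬ p.Nil := SimpleGraph.Walk.not_nil_of_ne hv
    obtain ⟨w, hadj, q, rfl⟩ := SimpleGraph.Walk.not_nil_iff.mp hnn
    obtain ⟨q', hq'⟩ := SimpleGraph.Reachable.exists_walk_length_eq_dist (hconn w root)
    have h1 : G.dist w root ≤ q.length := SimpleGraph.dist_le q
    have h2 : G.dist v root ≤ q'.length + 1 := by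
      simpa using SimpleGraph.dist_le (SimpleGraph.Walk.cons hadj q')
    have hlen : q.length + 1 = G.dist v root := by simpa using hp
    have hdw : G.dist w root + 1 = G.dist v root := by omega
    have hadj' := hadj
    rw [hGdef, SimpleGraph.fromEdgeSet_adj] at hadj'
    obtain ⟨⟨qq, hqE, hqe⟩, -⟩ := hadj'
    refine ⟨qq, w, hqE, hqe.symm, ?_⟩
    simp only [hddef]
    rw [SimpleGraph.dist_comm (u := root) (v := w),
      SimpleGraph.dist_comm (u := root) (v := v)]
    exact hdw
  choose! pe wv hpeE hpes hped using key
  have hdne : ∀ v, v ≠ root → wv v ≠ v := by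
    intro v hv h
    have h2 := hped v hv
    rw [h] at h2; omega
  have hpe_inj : ∀ v ∈ univ.erase root, ∀ v' ∈ univ.erase root, pe v = pe v' → v = v' := by
    intro v hv v' hv' h
    have hv1 : v ≠ root := (mem_erase.mp hv).1
    have hv'1 : v' ≠ root := (mem_erase.mp hv').1
    have h2 : s(v, wv v) = s(v', wv v') := by rw [← hpes v hv1, ← hpes v' hv'1, h]
    rcases Sym2.eq_iff.mp h2 with ⟨h3, h4⟩ | ⟨h3, h4⟩
    · exact h3
    · exfalso
      have e1 := hped v hv1
      have e2 := hped v' hv'1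
      rw [h4] at e1
      rw [← h3] at e2
      omega
  -- surjectivity of pe
  have hcard2 : E.card ≤ (univ.erase root).card := by
    rw [hcard, card_erase_of_mem (mem_univ _), card_univ, Fintype.card_fin]
  have hsurj := Finset.surj_on_of_inj_on_of_card_le (s := univ.erase root) (t := E)
      (fun v _ => pe v) (fun v hv => hpeE v (mem_erase.mp hv).1)
      (fun v v' hv hv' h => hpe_inj v hv v' hv' h) hcard2
  -- sorted list of non-root vertices, deepest first
  set key2 : Fin r → ℕ := fun v => d v * r + v.val with hkey2
  have hkey2inj : Function.Injective key2 := by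
    intro u v h
    simp only [hkey2] at h
    rw [Nat.mul_comm (d u) r, Nat.mul_comm (d v) r] at h
    have h1 : (r * d u + u.val) % r = (r * d v + v.val) % r := by rw [h]
    rw [Nat.mul_add_mod, Nat.mul_add_mod, Nat.mod_eq_of_lt u.isLt, Nat.mod_eq_of_lt v.isLt] at h1
    exact Fin.ext h1
  have hkey2d : ∀ a b : Fin r, key2 b ≤ key2 a → d b ≤ d a := by
    intro a b h
    by_contra hc
    push_neg at hc
    have h2 : (d a + 1) * r ≤ d b * r := Nat.mul_le_mul_right r hc
    have h3 : (d a + 1) * r = d a * r + r := by ring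
    have h4 := a.isLt
    simp only [hkey2] at h
    omega
  set R : Fin r → Fin r → Prop := fun u v => key2 v ≤ key2 u with hR
  haveI : IsTrans (Fin r) R := ⟨fun _ _ _ hab hbc => le_trans hbc hab⟩
  haveI : Std.Antisymm R := ⟨fun _ _ h1 h2 => hkey2inj (le_antisymm h2 h1)⟩
  haveI : Std.Total R := ⟨fun a b => (le_total (key2 b) (key2 a)).imp id id⟩
  set L : List (Fin r) := Finset.sort (univ.erase root) R with hL
  have hLnd : L.Nodup := Finset.sort_nodup _ R
  have hLmem : ∀ v, v ∈ L ↔ v ∈ univ.erase root := fun v => Finset.mem_sort R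
  have hLlen : L.length = r - 1 := by
    rw [hL, Finset.length_sort, card_erase_of_mem (mem_univ _), card_univ, Fintype.card_fin]
  have hLsorted : L.Pairwise R := Finset.pairwise_sort _ R
  have hLto : L.toFinset = univ.erase root := by
    ext v; rw [List.mem_toFinset]; exact hLmem v
  -- measures
  set μ : Fin r → Measure ℝ := fun _ => volume.restrict (Set.Icc (0:ℝ) T) with hμ
  haveI hfin : IsFiniteMeasure (volume.restrict (Set.Icc (0:ℝ) T)) :=
    ⟨by rw [Measure.restrict_apply_univ, Real.volume_Icc]; exact ENNReal.ofReal_lt_top⟩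
  haveI : ∀ i : Fin r, SigmaFinite (μ i) := fun i =>
    show SigmaFinite (volume.restrict (Set.Icc (0:ℝ) T)) from inferInstance
  have hμuniv : ∀ i, μ i Set.univ = ENNReal.ofReal T := by
    intro i
    show volume.restrict (Set.Icc (0:ℝ) T) Set.univ = _
    rw [Measure.restrict_apply_univ, Real.volume_Icc, sub_zero]
  set F : (Fin r → ℝ) → ℝ≥0∞ := fun t => ∏ p ∈ E, g (t p.1 - t p.2) with hFdef
  have hF : Measurable F := by
    apply Finset.measurable_prod
    intro p _
    exact hg.comp ((measurable_pi_apply p.1).sub (measurable_pi_apply p.2))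
  have hIlt : I ≠ ⊤ := by
    rw [hIdef]
    exact hint.lintegral_lt_top.ne
  -- translation bounds
  have htrans1 : ∀ c : ℝ, (∫⁻ y, g (y - c) ∂volume.restrict (Set.Icc (0:ℝ) T)) ≤ I := by
    intro c
    calc (∫⁻ y, g (y - c) ∂volume.restrict (Set.Icc (0:ℝ) T)) ≤ ∫⁻ y, g (y - c) :=
          lintegral_mono' Measure.restrict_le_self le_rfl
      _ = I := (measurePreserving_sub_right volume c).lintegral_comp hg
  have htrans2 : ∀ c : ℝ, (∫⁻ y, g (c - y) ∂volume.restrict (Set.Icc (0:ℝ) T)) ≤ I := by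
    intro c
    have h := ((Measure.measurePreserving_neg (volume : Measure ℝ)).comp
        (measurePreserving_add_right volume (-c))).lintegral_comp hg
    simp only [Function.comp] at h
    calc (∫⁻ y, g (c - y) ∂volume.restrict (Set.Icc (0:ℝ) T)) ≤ ∫⁻ y, g (c - y) :=
          lintegral_mono' Measure.restrict_le_self le_rfl
      _ = ∫⁻ y, g (-(y + -c)) := by simp_rw [neg_add, neg_neg, add_comm, sub_eq_add_neg]
      _ = I := h
  -- main induction
  have main : ∀ n, n ≤ L.length → ∀ x : Fin r → ℝ,
      (∫⋯∫⁻_(L.take n).toFinset, F ∂μ) x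
        ≤ I ^ n * ((L.drop n).map (fun u => g (x (pe u).1 - x (pe u).2))).prod := by
    intro n
    induction n with
    | zero =>
      intro _ x
      simp only [List.take_zero, List.toFinset_nil, lmarginal_empty, List.drop_zero,
        pow_zero, one_mul]
      have heq : F x = ∏ v ∈ univ.erase root, g (x (pe v).1 - x (pe v).2) := by
        rw [hFdef]
        refine (Finset.prod_bij (fun v _ => pe v) (fun v hv => hpeE v (mem_erase.mp hv).1)
          (fun v hv v' hv' h => hpe_inj v hv v' hv' h) ?_ (fun v hv => rfl)).symm
        intro b hb
        obtain ⟨a, ha, hab⟩ := hsurj b hb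
        exact ⟨a, ha, hab.symm⟩
      rw [heq, ← hLto, List.prod_toFinset _ hLnd]
    | succ n ih =>
      intro hn1 x
      have hn : n < L.length := by omega
      set v : Fin r := L.get ⟨n, hn⟩ with hv
      have hvL : v ∈ L := List.get_mem L ⟨n, hn⟩
      have hvroot : v ≠ root := (mem_erase.mp ((hLmem v).mp hvL)).1
      have hvdrop : v ∈ L.drop n := by
        rw [List.drop_eq_getElem_cons hn]
        exact List.mem_cons_self
      have hnd2 : (L.take n ++ L.drop n).Nodup := by rw [List.take_append_drop]; exact hLnd
      have hvnotin : v ∉ (L.take n).toFinset := by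
        intro hmem
        rw [List.mem_toFinset] at hmem
        exact (List.nodup_append.mp hnd2).2.2 v hmem v hvdrop rfl
      have htake : L.take (n+1) = L.take n ++ [v] := by
        rw [List.take_succ]
        simp [List.getElem?_eq_getElem hn, hv]
      have hstep : (L.take (n+1)).toFinset = insert v (L.take n).toFinset := by
        rw [htake]
        ext a; simp [or_comm]
      have hwv : wv v ≠ v := hdne v hvroot
      have hvtake : v ∈ L.take (n+1) := by rw [htake]; simp
      have hsplit : L.take (n+1) ++ L.drop (n+1) = L := List.take_append_drop _ _
      have hcross : ∀ a ∈ L.take (n+1), ∀ b ∈ L.drop (n+1), R a b := by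
        have hpair : (L.take (n+1) ++ L.drop (n+1)).Pairwise R := by
          rw [hsplit]; exact hLsorted
        exact (List.pairwise_append.mp hpair).2.2
      have hnd3 : (L.take (n+1) ++ L.drop (n+1)).Nodup := by rw [hsplit]; exact hLnd
      -- later edges do not touch v
      have hlater : ∀ u ∈ L.drop (n+1), (pe u).1 ≠ v ∧ (pe u).2 ≠ v := by
        intro u hu
        have hRvu : R v u := hcross v hvtake u hu
        have hdu : d u ≤ d v := hkey2d _ _ hRvu
        have huL : u ∈ L := List.mem_of_mem_drop hu
        have huroot : u ≠ root := (mem_erase.mp ((hLmem u).mp huL)).1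
        have hne1 : u ≠ v := by
          intro h
          exact (List.nodup_append.mp hnd3).2.2 v hvtake v (h ▸ hu) rfl
        have hne2 : wv u ≠ v := by
          intro h
          have h2 := hped u huroot
          rw [h] at h2
          omega
        rcases Sym2.eq_iff.mp (hpes u huroot) with ⟨h1, h2⟩ | ⟨h1, h2⟩
        · rw [h1, h2]; exact ⟨hne1, hne2⟩
        · rw [h1, h2]; exact ⟨hne2, hne1⟩
      have hC : ∀ y : ℝ, ((L.drop (n+1)).map
          (fun u => g ((Function.update x v y) (pe u).1 - (Function.update x v y) (pe u).2))).prod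
          = ((L.drop (n+1)).map (fun u => g (x (pe u).1 - x (pe u).2))).prod := by
        intro y
        congr 1
        refine List.map_congr_left fun u hu => ?_
        obtain ⟨h1, h2⟩ := hlater u hu
        rw [Function.update_of_ne h1, Function.update_of_ne h2]
      set C : ℝ≥0∞ := ((L.drop (n+1)).map (fun u => g (x (pe u).1 - x (pe u).2))).prod with hCdef
      have hdropn : L.drop n = v :: L.drop (n+1) := List.drop_eq_getElem_cons hn
      have hlast : (∫⁻ y, I ^ n * ((L.drop n).map
              (fun u => g ((Function.update x v y) (pe u).1
                - (Function.update x v y) (pe u).2))).prod ∂μ v)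
            ≤ I ^ (n+1) * C := by
        rcases Sym2.eq_iff.mp (hpes v hvroot) with ⟨h1, h2⟩ | ⟨h1, h2⟩
        · -- pe v = (v, wv v)
          have hfact : ∀ y : ℝ, I ^ n * ((L.drop n).map
              (fun u => g ((Function.update x v y) (pe u).1
                - (Function.update x v y) (pe u).2))).prod
              = (I ^ n * C) * g (y - x (wv v)) := by
            intro y
            rw [hdropn, List.map_cons, List.prod_cons, hC y, h1, h2,
              Function.update_self, Function.update_of_ne hwv]
            ring
          simp_rw [hfact]
          rw [lintegral_const_mul _ (show Measurable fun y : ℝ => g (y - x (wv v)) from hg.comp (measurable_id.sub_const _))]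
          calc (I ^ n * C) * ∫⁻ y, g (y - x (wv v)) ∂μ v
              ≤ (I ^ n * C) * I := mul_le_mul_right (htrans1 _) _
            _ = I ^ (n+1) * C := by ring
        · -- pe v = (wv v, v)
          have hfact : ∀ y : ℝ, I ^ n * ((L.drop n).map
              (fun u => g ((Function.update x v y) (pe u).1
                - (Function.update x v y) (pe u).2))).prod
              = (I ^ n * C) * g (x (wv v) - y) := by
            intro y
            rw [hdropn, List.map_cons, List.prod_cons, hC y, h1, h2,
              Function.update_self, Function.update_of_ne hwv]
            ring
          simp_rw [hfact]
          rw [lintegral_const_mul _ (show Measurable fun y : ℝ => g (x (wv v) - y) from hg.comp (measurable_const.sub measurable_id))]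
          calc (I ^ n * C) * ∫⁻ y, g (x (wv v) - y) ∂μ v
              ≤ (I ^ n * C) * I := mul_le_mul_right (htrans2 _) _
            _ = I ^ (n+1) * C := by ring
      calc (∫⋯∫⁻_(L.take (n+1)).toFinset, F ∂μ) x
          = ∫⁻ y, (∫⋯∫⁻_(L.take n).toFinset, F ∂μ) (Function.update x v y) ∂μ v := by
            rw [hstep, lmarginal_insert _ hF hvnotin]
        _ ≤ ∫⁻ y, I ^ n * ((L.drop n).map
              (fun u => g ((Function.update x v y) (pe u).1
                - (Function.update x v y) (pe u).2))).prod ∂μ v :=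
            lintegral_mono fun y => ih (by omega) _
        _ ≤ I ^ (n+1) * C := hlast
  -- conclude the lintegral bound
  have hrootnotin : root ∉ (L.take L.length).toFinset := by
    rw [List.take_length, hLto]
    simp
  have hbound : (∫⁻ t, F t ∂Measure.pi μ) ≤ ENNReal.ofReal T * I ^ (r - 1) := by
    have huniv : (univ : Finset (Fin r)) = insert root ((L.take L.length).toFinset) := by
      rw [List.take_length, hLto, Finset.insert_erase (mem_univ root)]
    rw [lintegral_eq_lmarginal_univ (fun _ => (0:ℝ)), huniv,
      lmarginal_insert _ hF hrootnotin]
    calc (∫⁻ y, (∫⋯∫⁻_(L.take L.length).toFinset, F ∂μ)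
            (Function.update (fun _ => (0:ℝ)) root y) ∂μ root)
        ≤ ∫⁻ _, I ^ L.length ∂μ root := by
          refine lintegral_mono fun y => ?_
          have h := main L.length le_rfl (Function.update (fun _ => (0:ℝ)) root y)
          simpa using h
      _ = ENNReal.ofReal T * I ^ (r - 1) := by
          rw [lintegral_const, hμuniv root, hLlen, mul_comm]
  -- back to the real integral
  have hpi_eq : (volume : Measure (Fin r → ℝ)).restrict
      (Set.pi Set.univ fun _ => Set.Icc (0:ℝ) T)
      = Measure.pi μ := by
    rw [volume_pi]
    refine (Measure.pi_eq (μ := μ) fun A hA => ?_).symm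
    rw [Measure.restrict_apply (MeasurableSet.univ_pi hA), ← Set.pi_inter_distrib, Measure.pi_pi]
    exact Finset.prod_congr rfl fun i _ => (Measure.restrict_apply (hA i)).symm
  have hFrealmeas : Measurable fun t : Fin r → ℝ => ∏ p ∈ E, ρ (t p.1 - t p.2) :=
    Finset.measurable_prod _ fun p _ =>
      hmeas.comp ((measurable_pi_apply p.1).sub (measurable_pi_apply p.2))
  rw [show (∫ t : Fin r → ℝ in Set.pi Set.univ (fun _ => Set.Icc (0 : ℝ) T),
        ∏ p ∈ E, ρ (t p.1 - t p.2))
      = ∫ t, (∏ p ∈ E, ρ (t p.1 - t p.2)) ∂Measure.pi μ from by rw [← hpi_eq]]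
  rw [integral_eq_lintegral_of_nonneg_ae
    (Filter.Eventually.of_forall fun t => Finset.prod_nonneg fun p _ => h0 _)
    hFrealmeas.aestronglyMeasurable]
  have hof : ∀ t : Fin r → ℝ, ENNReal.ofReal (∏ p ∈ E, ρ (t p.1 - t p.2)) = F t := fun t =>
    ENNReal.ofReal_prod_of_nonneg fun p _ => h0 _
  simp_rw [hof]
  have hIeq : ENNReal.ofReal (∫ x, ρ x) = I :=
    ofReal_integral_eq_lintegral_ofReal hint (Filter.Eventually.of_forall h0)
  refine ENNReal.toReal_le_of_le_ofReal
    (mul_nonneg hT.le (pow_nonneg (integral_nonneg h0) _)) ?_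
  calc (∫⁻ t, F t ∂Measure.pi μ) ≤ ENNReal.ofReal T * I ^ (r-1) := hbound
    _ = ENNReal.ofReal (T * (∫ x, ρ x) ^ (r - 1)) := by
        rw [← hIeq, ← ENNReal.ofReal_pow (integral_nonneg h0), ← ENNReal.ofReal_mul hT.le]
end
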